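/- arXiv:2103.14002 — 8 statements merged into one kernel-verified Lean document; each statement's English description precedes it below -/
import Mathlib

section
/- If α > 0, β > 0 and αβ = π, then √α · ∫₀^∞ e^{−x²}/cosh(αx) dx = √β · ∫₀^∞ e^{−x²}/cosh(βx) dx. -/
/-!
Put `I(c) = ∫_ℝ e^{-x²} / cosh (c x) dx`, twice the half-line integral. Integrating
`e^{-x²} cos (2xy) / cosh (c y)` over the plane in both orders, and using the Fourier cosine
transforms `∫ e^{-x²} cos (2xy) dx = √π e^{-y²}` and
`∫ cos (b y) / cosh y dy = π / cosh (π b / 2)`, gives `(π / c) I(π / c) = √π I(c)`, which is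
the claim for `c = β`, `π / β = α`. The transform of `1 / cosh` is the reflection formula
`B(a, 1 - a) = π / sin (π a)`, read through the substitution `t = sigmoid u`.
-/

open Real MeasureTheory Set
open scoped Complex
open Complex (I)

lemma sigmoid_mul_one_sub_smul_cpow (a : ℂ) (u : ℝ) :
    (sigmoid u * (1 - sigmoid u)) •
        ((sigmoid u : ℂ) ^ (a - 1) * (1 - (sigmoid u : ℂ)) ^ (1 - a - 1)) =
      cexp (a * u) / (1 + rexp u) := by
  have hL : 0 < 1 + rexp u := by positivity
  have hσ : sigmoid u = rexp u / (1 + rexp u) := by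
    rw [sigmoid_def, exp_neg]; field_simp; ring
  have h1σ : 1 - sigmoid u = (1 + rexp u)⁻¹ := by
    rw [← sigmoid_neg, sigmoid_def, neg_neg]
  have hlogσ : Real.log (sigmoid u) = u - Real.log (1 + rexp u) := by
    rw [hσ, Real.log_div (exp_pos u).ne' hL.ne', log_exp]
  have hlog1σ : Real.log (1 - sigmoid u) = -Real.log (1 + rexp u) := by
    rw [h1σ, log_inv]
  have hcpow {x : ℝ} (hx : 0 < x) (w : ℂ) : (x : ℂ) ^ w = cexp (Real.log x * w) := by
    rw [Complex.cpow_def_of_ne_zero (by exact_mod_cast hx.ne'), Complex.ofReal_log hx.le]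
  rw [show (1 : ℂ) - sigmoid u = ((1 - sigmoid u : ℝ) : ℂ) by push_cast; ring,
    hcpow (sigmoid_pos u), hcpow (sub_pos.2 (sigmoid_lt_one u)), hlogσ, hlog1σ,
    Complex.real_smul, ← Complex.exp_add, h1σ, hσ]
  have hexp : ((u - Real.log (1 + rexp u) : ℝ) : ℂ) * (a - 1) +
      ((-Real.log (1 + rexp u) : ℝ) : ℂ) * (1 - a - 1) =
      a * u - u + Real.log (1 + rexp u) := by
    push_cast; ring
  rw [hexp, Complex.exp_add, Complex.exp_sub, ← Complex.ofReal_exp, ← Complex.ofReal_exp,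
    exp_log hL]
  have : (rexp u : ℂ) ≠ 0 := by exact_mod_cast (exp_pos u).ne'
  have : (1 + rexp u : ℂ) ≠ 0 := by exact_mod_cast hL.ne'
  push_cast
  field_simp

theorem integral_cexp_mul_div_one_add_exp {a : ℂ} (h0 : 0 < a.re) (h1 : a.re < 1) :
    ∫ u : ℝ, cexp (a * u) / (1 + rexp u) = π / Complex.sin (π * a) := by
  have hbeta : Complex.betaIntegral a (1 - a) = π / Complex.sin (π * a) := by
    rw [← Complex.Gamma_mul_Gamma_one_sub, Complex.Gamma_mul_Gamma_eq_betaIntegral h0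
      (by simpa using h1), add_sub_cancel, Complex.Gamma_one, one_mul]
  have hsubst := integral_image_eq_integral_abs_deriv_smul MeasurableSet.univ
    (fun u _ => (hasDerivAt_sigmoid u).hasDerivWithinAt) sigmoid_injective.injOn
    (fun t : ℝ => (t : ℂ) ^ (a - 1) * (1 - (t : ℂ)) ^ (1 - a - 1))
  rw [image_univ, range_sigmoid, setIntegral_univ] at hsubst
  rw [← hbeta, Complex.betaIntegral, intervalIntegral.integral_of_le zero_le_one,
    integral_Ioc_eq_integral_Ioo, hsubst]
  refine integral_congr_ae (.of_forall fun u => ?_)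
  dsimp only
  rw [abs_of_pos (mul_pos (sigmoid_pos u) (sub_pos.2 (sigmoid_lt_one u)))]
  exact (sigmoid_mul_one_sub_smul_cpow a u).symm

lemma one_add_sq_le_four_mul_cosh (y : ℝ) : 1 + y ^ 2 ≤ 4 * cosh y := by
  rw [← cosh_abs, cosh_eq]
  nlinarith [quadratic_le_exp_of_nonneg (abs_nonneg y), exp_pos (-|y|), sq_abs y, abs_nonneg y]

lemma integrable_inv_cosh : Integrable fun y : ℝ => (cosh y)⁻¹ := by
  refine (integrable_inv_one_add_sq.const_mul 4).mono'
    (continuous_cosh.inv₀ fun y => (cosh_pos y).ne').aestronglyMeasurable (.of_forall fun y => ?_)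
  rw [norm_inv, norm_of_nonneg (cosh_pos y).le]
  calc (cosh y)⁻¹ ≤ ((1 + y ^ 2) / 4)⁻¹ :=
        inv_anti₀ (by positivity) (by linarith [one_add_sq_le_four_mul_cosh y])
    _ = 4 * (1 + y ^ 2)⁻¹ := by rw [inv_div, div_eq_mul_inv]

lemma Complex.sin_pi_mul_one_add_mul_I_div_two (b : ℝ) :
    Complex.sin (π * ((1 + b * I) / 2)) = (Real.cosh (π * b / 2) : ℝ) := by
  rw [show (π : ℂ) * ((1 + b * I) / 2) = ↑(π / 2) + ↑(π * b / 2) * I by push_cast; ring,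
    Complex.sin_add, Complex.cos_mul_I, Complex.sin_mul_I, ← Complex.ofReal_sin,
    ← Complex.ofReal_cos, Real.sin_pi_div_two, Real.cos_pi_div_two, Complex.ofReal_cosh]
  push_cast
  ring

lemma cexp_mul_I_div_cosh_eq (b y : ℝ) :
    cexp (b * y * I) / cosh y = 2 * (cexp ((1 + b * I) / 2 * ↑(2 * y)) / (1 + rexp (2 * y))) := by
  have hc : (cosh y : ℂ) ≠ 0 := by exact_mod_cast (cosh_pos y).ne'
  have hd : (1 + rexp (2 * y) : ℂ) ≠ 0 := by
    exact_mod_cast (by positivity : 0 < 1 + rexp (2 * y)).ne'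
  rw [Complex.ofReal_cosh, Complex.cosh, Complex.ofReal_exp,
    show (1 + b * I) / 2 * ↑(2 * y) = (y : ℂ) + b * y * I by push_cast; ring,
    show ((2 * y : ℝ) : ℂ) = y + y by push_cast; ring, Complex.exp_add, Complex.exp_add,
    Complex.exp_neg]
  field_simp
  ring

theorem integral_cexp_mul_I_div_cosh (b : ℝ) :
    ∫ y : ℝ, cexp (b * y * I) / cosh y = (π / cosh (π * b / 2) : ℝ) := by
  have hre : 0 < ((1 + b * I) / 2).re := by simp
  have hre' : ((1 + b * I) / 2).re < 1 := by norm_num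
  simp_rw [cexp_mul_I_div_cosh_eq, integral_const_mul]
  rw [Measure.integral_comp_mul_left (fun u : ℝ => cexp ((1 + b * I) / 2 * u) / (1 + rexp u)),
    integral_cexp_mul_div_one_add_exp hre hre', Complex.sin_pi_mul_one_add_mul_I_div_two,
    abs_of_pos (by norm_num : (0 : ℝ) < 2⁻¹), Complex.real_smul]
  push_cast
  ring

lemma integrable_cexp_mul_I_div_cosh (b : ℝ) :
    Integrable fun y : ℝ => cexp (b * y * I) / cosh y := by
  have hcont : Continuous fun y : ℝ => cexp (b * y * I) / cosh y :=
    (by fun_prop : Continuous fun y : ℝ => cexp (b * y * I)).div (by fun_prop)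
      fun y => by exact_mod_cast (cosh_pos y).ne'
  refine integrable_inv_cosh.mono' hcont.aestronglyMeasurable (.of_forall fun y => ?_)
  rw [norm_div, ← Complex.ofReal_mul, Complex.norm_exp_ofReal_mul_I, Complex.norm_real,
    norm_of_nonneg (cosh_pos y).le, one_div]

theorem integral_cos_mul_div_cosh (b : ℝ) :
    ∫ y : ℝ, cos (b * y) / cosh y = π / cosh (π * b / 2) := by
  have h := integral_re (integrable_cexp_mul_I_div_cosh b)
  rw [integral_cexp_mul_I_div_cosh] at h
  simp_rw [RCLike.re_eq_complex_re, ← Complex.ofReal_mul, Complex.div_ofReal_re,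
    Complex.exp_ofReal_mul_I_re] at h
  rw [h]
  norm_cast

theorem integral_cos_mul_div_cosh_mul {c : ℝ} (hc : 0 < c) (b : ℝ) :
    ∫ y : ℝ, cos (b * y) / cosh (c * y) = π / (c * cosh (π * b / (2 * c))) := by
  have h := Measure.integral_comp_mul_left (fun y : ℝ => cos (b / c * y) / cosh y) c
  simp only [integral_cos_mul_div_cosh, abs_inv, abs_of_pos hc, smul_eq_mul] at h
  rw [show π * (b / c) / 2 = π * b / (2 * c) by ring] at h
  convert h using 1
  · congr with y
    field_simp
  · field_simp

theorem integral_exp_neg_mul_sq_mul_cos {b : ℝ} (hb : 0 < b) (t : ℝ) :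
    ∫ x : ℝ, rexp (-b * x ^ 2) * cos (t * x) = √(π / b) * rexp (-t ^ 2 / (4 * b)) := by
  have hb' : (-(b : ℂ)).re < 0 := by simpa using hb
  have h := integral_cexp_quadratic hb' (t * I) 0
  have hrhs : (π / -(-(b : ℂ))) ^ (1 / 2 : ℂ) * cexp (0 - (t * I) ^ 2 / (4 * -(b : ℂ))) =
      (√(π / b) * rexp (-t ^ 2 / (4 * b)) : ℝ) := by
    rw [sqrt_eq_rpow, Complex.ofReal_mul, Complex.ofReal_cpow (by positivity), Complex.ofReal_exp]
    congr 1
    · push_cast; rw [neg_neg]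
    · congr 1; push_cast; rw [mul_pow, Complex.I_sq]; ring
  rw [hrhs] at h
  have h' := integral_re (integrable_cexp_quadratic' hb' (t * I) 0)
  rw [h, RCLike.re_eq_complex_re, Complex.ofReal_re] at h'
  rw [← h']
  refine integral_congr_ae (.of_forall fun x => ?_)
  dsimp only
  rw [show -(b : ℂ) * x ^ 2 + t * I * x + 0 = ((-b * x ^ 2 : ℝ) : ℂ) + ((t * x : ℝ) : ℂ) * I
    by push_cast; ring, Complex.exp_add, ← Complex.ofReal_exp, Complex.re_ofReal_mul,
    Complex.exp_ofReal_mul_I_re]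

lemma integrable_exp_neg_sq_mul_cos_div_cosh {c : ℝ} (hc : 0 < c) :
    Integrable (Function.uncurry fun x y : ℝ => rexp (-x ^ 2) * cos (2 * x * y) / cosh (c * y))
      (volume.prod volume) := by
  have hcont : Continuous (Function.uncurry fun x y : ℝ =>
      rexp (-x ^ 2) * cos (2 * x * y) / cosh (c * y)) :=
    (by fun_prop : Continuous fun z : ℝ × ℝ => rexp (-z.1 ^ 2) * cos (2 * z.1 * z.2)).div
      (by fun_prop) fun z => (cosh_pos _).ne'
  have hdom : Integrable (fun z : ℝ × ℝ => rexp (-1 * z.1 ^ 2) * (cosh (c * z.2))⁻¹)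
      (volume.prod volume) :=
    (integrable_exp_neg_mul_sq one_pos).mul_prod (integrable_inv_cosh.comp_mul_left' hc.ne')
  refine hdom.mono' hcont.aestronglyMeasurable (.of_forall fun z => ?_)
  rw [Function.uncurry_apply_pair, norm_div, norm_mul, norm_of_nonneg (exp_pos _).le,
    norm_of_nonneg (cosh_pos _).le, neg_one_mul, div_eq_mul_inv, mul_assoc]
  gcongr
  exact mul_le_of_le_one_left (by positivity) (abs_cos_le_one _)

theorem pi_div_mul_integral_exp_neg_sq_div_cosh {c : ℝ} (hc : 0 < c) :
    π / c * ∫ x : ℝ, rexp (-x ^ 2) / cosh (π / c * x) =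
      √π * ∫ y : ℝ, rexp (-y ^ 2) / cosh (c * y) := by
  have hswap := integral_integral_swap (integrable_exp_neg_sq_mul_cos_div_cosh hc)
  have hinner_y (x : ℝ) : ∫ y, rexp (-x ^ 2) * cos (2 * x * y) / cosh (c * y) =
      π / c * (rexp (-x ^ 2) / cosh (π / c * x)) := by
    simp_rw [mul_div_assoc]
    rw [integral_const_mul, integral_cos_mul_div_cosh_mul hc,
      show π * (2 * x) / (2 * c) = π / c * x by ring]
    field_simp
  have hinner_x (y : ℝ) : ∫ x, rexp (-x ^ 2) * cos (2 * x * y) / cosh (c * y) =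
      √π * (rexp (-y ^ 2) / cosh (c * y)) := by
    calc ∫ x, rexp (-x ^ 2) * cos (2 * x * y) / cosh (c * y)
        = (∫ x, rexp (-1 * x ^ 2) * cos (2 * y * x)) / cosh (c * y) := by
          rw [← integral_div]
          congr with x
          ring_nf
      _ = √π * (rexp (-y ^ 2) / cosh (c * y)) := by
          rw [integral_exp_neg_mul_sq_mul_cos one_pos, div_one,
            show -(2 * y) ^ 2 / (4 * 1) = -y ^ 2 by ring, mul_div_assoc]
  simp_rw [hinner_y, hinner_x, integral_const_mul] at hswap
  exact hswap

lemma integral_Ioi_exp_neg_sq_div_cosh (c : ℝ) :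
    ∫ x in Ioi (0 : ℝ), rexp (-x ^ 2) / cosh (c * x) =
      (∫ x, rexp (-x ^ 2) / cosh (c * x)) / 2 := by
  have h := integral_comp_abs (f := fun x => rexp (-x ^ 2) / cosh (c * x))
  simp only [sq_abs] at h
  simp_rw [← cosh_abs (c * |_|), abs_mul, abs_abs, ← abs_mul, cosh_abs] at h
  rw [h]
  ring

theorem ramanujan_question_295 (α β : ℝ) (hα : 0 < α) (hβ : 0 < β)
    (hαβ : α * β = π) :
    Real.sqrt α * ∫ x in Set.Ioi (0:ℝ), Real.exp (-x ^ 2) / Real.cosh (α * x)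
      = Real.sqrt β * ∫ x in Set.Ioi (0:ℝ), Real.exp (-x ^ 2) / Real.cosh (β * x) := by
  have hπβ : π / β = α := by rw [← hαβ, mul_div_cancel_right₀ _ hβ.ne']
  have key := pi_div_mul_integral_exp_neg_sq_div_cosh hβ
  rw [hπβ, ← hαβ, sqrt_mul hα.le] at key
  rw [integral_Ioi_exp_neg_sq_div_cosh, integral_Ioi_exp_neg_sq_div_cosh]
  refine mul_left_cancel₀ (sqrt_pos.2 hα).ne' ?_
  linear_combination (key + (∫ x, rexp (-x ^ 2) / cosh (α * x)) * mul_self_sqrt hα.le) / 2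
end

section
/- Let f : [0,∞) → ℝ be continuous and suppose the limit L = lim_{x→∞} f(x) exists. Then for all a, b > 0, the improper integral ∫₀^∞ (f(ax) − f(bx))/x dx converges and equals (f(0) − L) · log(b/a). -/
/-!
Substituting `x = exp t` turns `∫ (f (a x) - f (b x)) / x dx` into `∫ (h (t + α) - h (t + β)) dt`
with `h = f ∘ exp`, `α = log a`, `β = log b`. Over `[A, B]` this difference of translates
telescopes to `∫_α^β h (A + v) dv - ∫_α^β h (B + v) dv`, and as `A → -∞`, `B → ∞` the two
integrands converge uniformly on `[α, β]` to the constants `h (-∞) = f 0` and `h (∞) = L`.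
-/

open Real Filter Topology Set intervalIntegral
open scoped Interval

section Translation

variable {E : Type*} [NormedAddCommGroup E] [NormedSpace ℝ E] {h : ℝ → E}

theorem tendsto_fst_add_snd_atTop_prod_principal (s : Set ℝ) (hs : BddBelow s) :
    Tendsto (fun q : ℝ × ℝ => q.1 + q.2) (atTop ×ˢ 𝓟 s) atTop := by
  obtain ⟨C, hC⟩ := hs
  exact tendsto_atTop_add_right_of_le' _ C tendsto_fst ((eventually_principal.2 hC).prod_inr _)

theorem tendsto_fst_add_snd_atBot_prod_principal (s : Set ℝ) (hs : BddAbove s) :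
    Tendsto (fun q : ℝ × ℝ => q.1 + q.2) (atBot ×ˢ 𝓟 s) atBot := by
  obtain ⟨C, hC⟩ := hs
  exact tendsto_atBot_add_right_of_ge' _ C tendsto_fst ((eventually_principal.2 hC).prod_inr _)

theorem tendsto_intervalIntegral_comp_add_left [CompleteSpace E] {l : Filter ℝ} [l.IsCountablyGenerated] {c : E}
    (hh : Continuous h) (hlim : Tendsto h l (𝓝 c)) {α β : ℝ}
    (hl : Tendsto (fun q : ℝ × ℝ => q.1 + q.2) (l ×ˢ 𝓟 [[α, β]]) l) :
    Tendsto (fun A => ∫ v in α..β, h (A + v)) l (𝓝 ((β - α) • c)) := by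
  have hunif : TendstoUniformlyOn (fun A v => h (A + v)) (fun _ => c) l [[α, β]] :=
    tendsto_prod_principal_iff.mp (hlim.comp hl)
  rw [← integral_const]
  exact hunif.tendsto_intervalIntegral_of_continuousOn
    (.of_forall fun A => (hh.comp (continuous_const_add A)).continuousOn)

theorem integral_sub_comp_add_right (hh : Continuous h) (A B α β : ℝ) :
    ∫ t in A..B, (h (t + α) - h (t + β)) =
      (∫ v in α..β, h (A + v)) - ∫ v in α..β, h (B + v) := by
  have hint : ∀ x y : ℝ, IntervalIntegrable h MeasureTheory.volume x y :=
    hh.intervalIntegrable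
  have htrans : ∀ γ, IntervalIntegrable (fun t => h (t + γ)) MeasureTheory.volume A B :=
    fun γ => (hh.comp (continuous_add_const γ)).intervalIntegrable _ _
  rw [integral_sub (htrans α) (htrans β), integral_comp_add_right h, integral_comp_add_right h,
    integral_interval_sub_interval_comm (hint _ _) (hint _ _) (hint _ _),
    integral_comp_add_left, integral_comp_add_left]

theorem tendsto_integral_sub_comp_add_right [CompleteSpace E] (hh : Continuous h) {c₁ c₂ : E}
    (hbot : Tendsto h atBot (𝓝 c₁)) (htop : Tendsto h atTop (𝓝 c₂)) (α β : ℝ) :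
    Tendsto (fun p : ℝ × ℝ => ∫ t in p.1..p.2, (h (t + α) - h (t + β))) (atBot ×ˢ atTop)
      (𝓝 ((β - α) • (c₁ - c₂))) := by
  have hA := tendsto_intervalIntegral_comp_add_left hh hbot
    (tendsto_fst_add_snd_atBot_prod_principal [[α, β]] bddAbove_Icc)
  have hB := tendsto_intervalIntegral_comp_add_left hh htop
    (tendsto_fst_add_snd_atTop_prod_principal [[α, β]] bddBelow_Icc)
  simp only [integral_sub_comp_add_right hh, smul_sub]
  exact (hA.comp tendsto_fst).sub (hB.comp tendsto_snd)

end Translation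

theorem integral_div_eq_integral_comp_exp {g : ℝ → ℝ} (hg : ContinuousOn g (Ioi 0)) {ε R : ℝ}
    (hε : 0 < ε) (hR : 0 < R) :
    ∫ x in ε..R, g x / x = ∫ t in log ε..log R, g (exp t) := by
  have hsub := integral_comp_mul_deriv' (f := exp) (f' := exp) (g := fun x => g x / x)
    (a := log ε) (b := log R) (fun t _ => hasDerivAt_exp t) continuous_exp.continuousOn
    ((hg.div continuousOn_id fun x hx => (mem_Ioi.1 hx).ne').mono
      (image_subset_iff.2 fun t _ => exp_pos t))
  rw [exp_log hε, exp_log hR] at hsub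
  rw [← hsub]
  refine integral_congr fun t _ => ?_
  simp only [Function.comp_apply]
  exact div_mul_cancel₀ _ (exp_pos t).ne'

theorem frullani (f : ℝ → ℝ) (hf : ContinuousOn f (Set.Ici 0))
    (L : ℝ) (hL : Tendsto f atTop (nhds L))
    (a b : ℝ) (ha : 0 < a) (hb : 0 < b) :
    Tendsto
      (fun p : ℝ × ℝ => ∫ x in p.1..p.2, (f (a * x) - f (b * x)) / x)
      ((nhdsWithin 0 (Set.Ioi 0)) ×ˢ atTop)
      (nhds ((f 0 - L) * Real.log (b / a))) := by
  have hexp : Continuous fun t => f (exp t) :=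
    hf.comp_continuous continuous_exp fun t => (exp_pos t).le
  have hbot : Tendsto (fun t => f (exp t)) atBot (𝓝 (f 0)) :=
    (hf 0 self_mem_Ici).tendsto.comp
      (tendsto_exp_atBot_nhdsGT.mono_right (nhdsWithin_mono _ Ioi_subset_Ici_self))
  have hlim := (tendsto_integral_sub_comp_add_right hexp hbot (hL.comp tendsto_exp_atTop)
    (log a) (log b)).comp (tendsto_log_nhdsGT_zero.prodMap tendsto_log_atTop)
  rw [smul_eq_mul, ← log_div hb.ne' ha.ne', mul_comm] at hlim
  have hscale : ∀ (c : ℝ), 0 < c → ∀ t, f (c * exp t) = f (exp (t + log c)) := fun c hc t => by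
    rw [exp_add, exp_log hc, mul_comm]
  refine hlim.congr' ?_
  filter_upwards [prod_mem_prod self_mem_nhdsWithin (Ioi_mem_atTop 0)] with p ⟨hε, hR⟩
  have hcont : ContinuousOn (fun x => f (a * x) - f (b * x)) (Ioi 0) := by
    refine .sub (hf.comp (continuousOn_const.mul continuousOn_id) ?_)
      (hf.comp (continuousOn_const.mul continuousOn_id) ?_) <;>
    exact fun x hx => mem_Ici.2 (mul_pos ‹_› hx).le
  simp only [Function.comp_apply, Prod.map_fst, Prod.map_snd,
    integral_div_eq_integral_comp_exp hcont hε hR,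
    hscale a ha, hscale b hb]
end

section
/- Let f : [0,∞) → ℝ be continuous, and suppose f(x)/x is integrable on [c,∞) for every c > 0. Then for all a, b > 0, the improper integral ∫₀^∞ (f(ax) − f(bx))/x dx converges and equals f(0) · log(b/a). -/
open Real Filter MeasureTheory Set Topology

/-! Substituting `u = a x` and `u = b x` turns the two halves of the integral into the tails
`∫_{aε}^∞ f u / u` and `∫_{bε}^∞ f u / u`, whose difference is `∫_{aε}^{bε} f u / u`. Writing
`u = ε eˢ`, this is `∫_{log a}^{log b} f (ε eˢ) ds`, which depends continuously on `ε ≥ 0` and equals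
`f 0 * log (b / a)` at `ε = 0`. -/

theorem comp_mul_left_div_eq (g : ℝ → ℝ) {c : ℝ} (hc : c ≠ 0) :
    (fun x => g (c * x) / x) = fun x => c * (g (c * x) / (c * x)) :=
  funext fun x => by rw [← mul_div_assoc, mul_div_mul_left _ _ hc]

theorem integral_Ioi_comp_mul_left_div (g : ℝ → ℝ) {c : ℝ} (hc : 0 < c) (ε : ℝ) :
    ∫ x in Ioi ε, g (c * x) / x = ∫ u in Ioi (c * ε), g u / u := by
  rw [comp_mul_left_div_eq g hc.ne', integral_const_mul, ← smul_eq_mul]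
  exact integral_comp_mul_left_Ioi' (fun u => g u / u) ε hc

theorem MeasureTheory.IntegrableOn.comp_mul_left_div {g : ℝ → ℝ} {c ε : ℝ} (hc : 0 < c)
    (hg : IntegrableOn (fun u => g u / u) (Ioi (c * ε))) :
    IntegrableOn (fun x => g (c * x) / x) (Ioi ε) := by
  rw [comp_mul_left_div_eq g hc.ne']
  exact ((integrableOn_Ioi_comp_mul_left_iff (fun u => g u / u) ε hc).2 hg).const_mul c

theorem integral_Ioi_sub_comp_mul_div {g : ℝ → ℝ} {a b ε : ℝ} (ha : 0 < a) (hb : 0 < b)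
    (hga : IntegrableOn (fun u => g u / u) (Ioi (a * ε)))
    (hgb : IntegrableOn (fun u => g u / u) (Ioi (b * ε))) :
    ∫ x in Ioi ε, (g (a * x) - g (b * x)) / x = ∫ u in a * ε..b * ε, g u / u := by
  simp_rw [sub_div]
  rw [integral_sub (hga.comp_mul_left_div ha) (hgb.comp_mul_left_div hb),
    integral_Ioi_comp_mul_left_div g ha, integral_Ioi_comp_mul_left_div g hb,
    intervalIntegral.integral_Ioi_sub_Ioi' hga hgb]

theorem intervalIntegral_div_self_eq_integral_comp_exp (g : ℝ → ℝ) {a b ε : ℝ} (ha : 0 < a)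
    (hb : 0 < b) (hε : 0 < ε) :
    ∫ u in a * ε..b * ε, g u / u = ∫ s in log a..log b, g (exp s * ε) := by
  have hsubst := intervalIntegral.integral_comp_mul_deriv_of_deriv_nonneg
    (g := fun u => g u / u) (f := fun s => exp s * ε) (f' := fun s => exp s * ε)
    (a := log a) (b := log b) (by fun_prop)
    (fun s _ => (hasDerivAt_exp s).mul_const ε) (fun s _ => by positivity)
  simp only [exp_log ha, exp_log hb, Function.comp_apply] at hsubst
  rw [← hsubst]
  refine intervalIntegral.integral_congr fun s _ => ?_
  exact div_mul_cancel₀ _ (by positivity)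

theorem tendsto_intervalIntegral_div_self {g : ℝ → ℝ} (hg : ContinuousOn g (Ici 0)) {a b : ℝ}
    (ha : 0 < a) (hb : 0 < b) :
    Tendsto (fun ε => ∫ u in a * ε..b * ε, g u / u) (𝓝[>] 0) (𝓝 (g 0 * log (b / a))) := by
  set G := fun u => g (max u 0)
  have hG : Continuous G :=
    hg.comp_continuous (continuous_id.max continuous_const) fun u => le_max_right u 0
  have hcont : Continuous fun ε => ∫ s in log a..log b, G (exp s * ε) := by fun_prop
  have hzero : (∫ s in log a..log b, G (exp s * 0)) = g 0 * log (b / a) := by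
    simp [G, log_div hb.ne' ha.ne', mul_comm]
  rw [← hzero]
  refine (hcont.continuousWithinAt.tendsto).congr' ?_
  filter_upwards [self_mem_nhdsWithin] with ε (hε : 0 < ε)
  rw [intervalIntegral_div_self_eq_integral_comp_exp g ha hb hε]
  refine intervalIntegral.integral_congr fun s _ => ?_
  simp only [G, max_eq_left (by positivity : (0:ℝ) ≤ exp s * ε)]

theorem frullani_variant (f : ℝ → ℝ) (hf : ContinuousOn f (Set.Ici 0))
    (hint : ∀ c : ℝ, 0 < c → IntegrableOn (fun x => f x / x) (Set.Ici c))
    (a b : ℝ) (ha : 0 < a) (hb : 0 < b) :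
    Tendsto
      (fun ε : ℝ => ∫ x in Set.Ioi ε, (f (a * x) - f (b * x)) / x)
      (nhdsWithin 0 (Set.Ioi 0))
      (nhds (f 0 * Real.log (b / a))) := by
  have hint' : ∀ c, 0 < c → IntegrableOn (fun x => f x / x) (Ioi c) :=
    fun c hc => (hint c hc).mono_set Ioi_subset_Ici_self
  refine (tendsto_intervalIntegral_div_self hf ha hb).congr' ?_
  filter_upwards [self_mem_nhdsWithin] with ε (hε : 0 < ε)
  exact (integral_Ioi_sub_comp_mul_div ha hb (hint' _ (by positivity))
    (hint' _ (by positivity))).symm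
end

section
/- (q-binomial theorem) For complex a, q, z with |q| < 1 and |z| < 1, Σ_{m=0}^∞ ((a;q)_m / (q;q)_m) z^m = (az;q)_∞ / (z;q)_∞. -/
/-!
The series `S(w) = ∑ (a;q)_m / (q;q)_m w^m` converges for `‖w‖ < 1` by the ratio test, and the
recurrence `(1 - q^(m+1)) c_(m+1) = (1 - a q^m) c_m` of its coefficients is equivalent to the
functional equation `(1 - w) S(w) = (1 - a w) S(q w)`. Iterating it gives
`(z;q)_n S(z) = (az;q)_n S(q^n z)`, and letting `n → ∞`, where `S(q^n z) → S(0) = 1`, yields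
`(z;q)_∞ S(z) = (az;q)_∞`. For `a = 0` this reads `(z;q)_∞ S(z) = 1`, so `(z;q)_∞ ≠ 0`.
-/

open Filter Topology Finset

section QBinomial

variable {𝕜 : Type*} [NormedField 𝕜]

def qPochhammer (a q : 𝕜) (n : ℕ) : 𝕜 := ∏ k ∈ range n, (1 - a * q ^ k)

def qBinomialCoeff (a q : 𝕜) (m : ℕ) : 𝕜 := qPochhammer a q m / qPochhammer q q m

noncomputable def qBinomialSeries (a q w : 𝕜) : 𝕜 := ∑' m, qBinomialCoeff a q m * w ^ m

lemma norm_mul_pow_lt_one {w q : 𝕜} (hw : ‖w‖ < 1) (hq : ‖q‖ ≤ 1) (k : ℕ) :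
    ‖w * q ^ k‖ < 1 := by
  rw [norm_mul, norm_pow]
  exact mul_lt_one_of_nonneg_of_lt_one_left (norm_nonneg w) hw (pow_le_one₀ (norm_nonneg q) hq)

lemma one_sub_mul_pow_ne_zero {w q : 𝕜} (hw : ‖w‖ < 1) (hq : ‖q‖ ≤ 1) (k : ℕ) :
    1 - w * q ^ k ≠ 0 := by
  rw [sub_ne_zero]
  intro h
  simpa [← h] using norm_mul_pow_lt_one hw hq k

lemma qPochhammer_succ (a q : 𝕜) (n : ℕ) :
    qPochhammer a q (n + 1) = qPochhammer a q n * (1 - a * q ^ n) :=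
  prod_range_succ _ n

@[simp]
lemma qBinomialCoeff_zero (a q : 𝕜) : qBinomialCoeff a q 0 = 1 := by
  simp [qBinomialCoeff, qPochhammer]

lemma qBinomialCoeff_succ (a q : 𝕜) (m : ℕ) :
    qBinomialCoeff a q (m + 1) = qBinomialCoeff a q m * ((1 - a * q ^ m) / (1 - q * q ^ m)) := by
  simp only [qBinomialCoeff, qPochhammer_succ]
  rw [mul_div_mul_comm]

lemma qBinomialCoeff_succ_mul {q : 𝕜} (hq : ‖q‖ < 1) (a : 𝕜) (m : ℕ) :
    qBinomialCoeff a q (m + 1) * (1 - q * q ^ m) = qBinomialCoeff a q m * (1 - a * q ^ m) := by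
  rw [qBinomialCoeff_succ, mul_assoc, div_mul_cancel₀ _ (one_sub_mul_pow_ne_zero hq hq.le m)]

lemma tendsto_qBinomialCoeff_ratio {q : 𝕜} (hq : ‖q‖ < 1) (a : 𝕜) :
    Tendsto (fun m : ℕ ↦ (1 - a * q ^ m) / (1 - q * q ^ m)) atTop (𝓝 1) := by
  have hpow := tendsto_pow_atTop_nhds_zero_of_norm_lt_one hq
  have hnum : Tendsto (fun m : ℕ ↦ 1 - a * q ^ m) atTop (𝓝 (1 - a * 0)) :=
    tendsto_const_nhds.sub (hpow.const_mul a)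
  have hden : Tendsto (fun m : ℕ ↦ 1 - q * q ^ m) atTop (𝓝 (1 - q * 0)) :=
    tendsto_const_nhds.sub (hpow.const_mul q)
  have hratio := hnum.div hden (by simp)
  simp only [mul_zero, sub_zero, div_one] at hratio
  exact hratio

lemma summable_norm_qBinomialCoeff_mul_pow {q : 𝕜} (hq : ‖q‖ < 1) (a : 𝕜) {r : ℝ}
    (hr₀ : 0 ≤ r) (hr₁ : r < 1) :
    Summable fun m ↦ ‖qBinomialCoeff a q m‖ * r ^ m := by
  obtain ⟨s, hrs, hs₁⟩ := exists_between hr₁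
  refine summable_of_ratio_norm_eventually_le hs₁ ?_
  have hratio := ((tendsto_qBinomialCoeff_ratio hq a).norm.mul_const r).eventually_le_const
    (by simpa using hrs)
  filter_upwards [hratio] with m hm
  rw [qBinomialCoeff_succ, norm_mul, norm_mul, pow_succ]
  simp only [Real.norm_eq_abs, abs_mul, abs_norm, abs_pow, abs_of_nonneg hr₀]
  calc ‖qBinomialCoeff a q m‖ * ‖(1 - a * q ^ m) / (1 - q * q ^ m)‖ * (r ^ m * r)
      = ‖(1 - a * q ^ m) / (1 - q * q ^ m)‖ * r * (‖qBinomialCoeff a q m‖ * r ^ m) := by ring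
    _ ≤ s * (‖qBinomialCoeff a q m‖ * r ^ m) := by gcongr

variable [CompleteSpace 𝕜]

lemma summable_qBinomialCoeff_mul_pow {q w : 𝕜} (hq : ‖q‖ < 1) (hw : ‖w‖ < 1) (a : 𝕜) :
    Summable fun m ↦ qBinomialCoeff a q m * w ^ m :=
  (summable_norm_qBinomialCoeff_mul_pow hq a (norm_nonneg w) hw).of_norm_bounded
    fun m ↦ by rw [norm_mul, norm_pow]

lemma qBinomialSeries_functional_eq {q w : 𝕜} (hq : ‖q‖ < 1) (hw : ‖w‖ < 1) (a : 𝕜) :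
    (1 - w) * qBinomialSeries a q w = (1 - a * w) * qBinomialSeries a q (q * w) := by
  set c := qBinomialCoeff a q
  have hqw : ‖q * w‖ < 1 := by simpa [mul_comm] using norm_mul_pow_lt_one hw hq.le 1
  have h₁ := summable_qBinomialCoeff_mul_pow hq hw a
  have h₂ := summable_qBinomialCoeff_mul_pow hq hqw a
  -- comparing coefficients of `w ^ (m + 1)` is the recurrence for `c`
  have hcoeff : ∀ m, c (m + 1) * w ^ (m + 1) - c (m + 1) * (q * w) ^ (m + 1)
      = w * (c m * w ^ m) - a * w * (c m * (q * w) ^ m) := fun m ↦ by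
    linear_combination w ^ (m + 1) * qBinomialCoeff_succ_mul hq a m
  have hshift := (h₁.sub h₂).tsum_eq_zero_add
  simp only [hcoeff, c, qBinomialCoeff_zero, sub_self, zero_add, pow_zero] at hshift
  rw [h₁.tsum_sub h₂, (h₁.mul_left w) |>.tsum_sub (h₂.mul_left (a * w)), tsum_mul_left,
    tsum_mul_left] at hshift
  simp only [qBinomialSeries]
  linear_combination hshift

lemma tendsto_tsum_mul_pow_of_tendsto_zero {α : Type*} {l : Filter α} {c : ℕ → 𝕜} {r : ℝ}
    (hc : Summable fun m ↦ ‖c m‖ * r ^ m) {w : α → 𝕜} (hw : Tendsto w l (𝓝 0))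
    (hwr : ∀ᶠ n in l, ‖w n‖ ≤ r) :
    Tendsto (fun n ↦ ∑' m, c m * w n ^ m) l (𝓝 (c 0)) := by
  have h := tendsto_tsum_of_dominated_convergence (𝓕 := l) (f := fun n m ↦ c m * w n ^ m)
    (g := fun m ↦ if m = 0 then c 0 else 0) hc ?_ ?_
  · simpa only [tsum_ite_eq] using h
  · rintro (_ | m)
    · simpa using tendsto_const_nhds
    · simpa using (hw.pow (m + 1)).const_mul (c (m + 1))
  · filter_upwards [hwr] with n hn m
    rw [norm_mul, norm_pow]
    gcongr

lemma tendsto_qBinomialSeries_pow_mul {q z : 𝕜} (hq : ‖q‖ < 1) (hz : ‖z‖ < 1) (a : 𝕜) :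
    Tendsto (fun n : ℕ ↦ qBinomialSeries a q (q ^ n * z)) atTop (𝓝 1) := by
  have hpow := (tendsto_pow_atTop_nhds_zero_of_norm_lt_one hq).mul_const z
  rw [zero_mul] at hpow
  simpa only [qBinomialCoeff_zero, qBinomialSeries] using tendsto_tsum_mul_pow_of_tendsto_zero
    (summable_norm_qBinomialCoeff_mul_pow hq a (norm_nonneg z) hz) hpow
    (Eventually.of_forall fun n ↦ by
      rw [norm_mul, norm_pow]
      exact mul_le_of_le_one_left (norm_nonneg z) (pow_le_one₀ (norm_nonneg q) hq.le))

lemma qPochhammer_mul_qBinomialSeries {q z : 𝕜} (hq : ‖q‖ < 1) (hz : ‖z‖ < 1) (a : 𝕜) (n : ℕ) :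
    qPochhammer z q n * qBinomialSeries a q z
      = qPochhammer (a * z) q n * qBinomialSeries a q (q ^ n * z) := by
  induction n with
  | zero => simp [qPochhammer]
  | succ n ih =>
    have hw : ‖q ^ n * z‖ < 1 := by simpa [mul_comm] using norm_mul_pow_lt_one hz hq.le n
    have hstep := qBinomialSeries_functional_eq hq hw a
    rw [← mul_assoc q, ← pow_succ'] at hstep
    rw [qPochhammer_succ, qPochhammer_succ]
    linear_combination (1 - z * q ^ n) * ih + qPochhammer (a * z) q n * hstep

lemma multipliable_one_sub_mul_pow {q : 𝕜} (hq : ‖q‖ < 1) (w : 𝕜) :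
    Multipliable fun k : ℕ ↦ 1 - w * q ^ k := by
  have hsum : Summable fun k : ℕ ↦ ‖-(w * q ^ k)‖ := by
    simpa using (summable_geometric_of_lt_one (norm_nonneg q) hq).mul_left ‖w‖
  simpa [sub_eq_add_neg] using multipliable_one_add_of_summable hsum

lemma tprod_mul_qBinomialSeries {q z : 𝕜} (hq : ‖q‖ < 1) (hz : ‖z‖ < 1) (a : 𝕜) :
    (∏' k : ℕ, (1 - z * q ^ k)) * qBinomialSeries a q z = ∏' k : ℕ, (1 - a * z * q ^ k) := by
  have hlhs := (multipliable_one_sub_mul_pow hq z).tendsto_prod_tprod_nat.mul_const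
    (qBinomialSeries a q z)
  have hrhs := (multipliable_one_sub_mul_pow hq (a * z)).tendsto_prod_tprod_nat.mul
    (tendsto_qBinomialSeries_pow_mul hq hz a)
  rw [mul_one] at hrhs
  exact tendsto_nhds_unique (hlhs.congr fun n ↦ qPochhammer_mul_qBinomialSeries hq hz a n) hrhs

lemma tprod_one_sub_mul_pow_ne_zero {q z : 𝕜} (hq : ‖q‖ < 1) (hz : ‖z‖ < 1) :
    ∏' k : ℕ, (1 - z * q ^ k) ≠ 0 := by
  have h := tprod_mul_qBinomialSeries hq hz (0 : 𝕜)
  simp only [zero_mul, sub_zero, tprod_one] at h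
  exact left_ne_zero_of_mul_eq_one h

end QBinomial

theorem q_binomial_theorem (a q z : ℂ) (hq : ‖q‖ < 1) (hz : ‖z‖ < 1) :
    ∑' m : ℕ,
        ((∏ k ∈ Finset.range m, (1 - a * q ^ k)) /
          (∏ k ∈ Finset.range m, (1 - q * q ^ k))) * z ^ m
      = (∏' k : ℕ, (1 - a * z * q ^ k)) / (∏' k : ℕ, (1 - z * q ^ k)) := by
  rw [eq_div_iff (tprod_one_sub_mul_pow_ne_zero hq hz), mul_comm]
  exact tprod_mul_qBinomialSeries hq hz a
end

section
/- Let u = ∫₀^α dφ/√(1 − x² sin²φ), v = ∫₀^β dφ/√(1 − x² sin²φ), w = ∫₀^γ dφ/√(1 − x² sin²φ), where 0 < x < 1 and α, β, γ ∈ [0, π/2]. If cot α · cot β = cos γ/(sin α sin β) + √(1 − x² sin² γ), then u + v = w. -/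
/-!
Fix `γ` and, for `0 ≤ t < π/2`, let `φ(t)` solve `cos t cos φ - Δ(γ) sin t sin φ = cos γ`, where
`Δ(θ) = √(1 - k² sin² θ)`. This can be solved in closed form, and differentiating gives
`φ'(t) = -Δ(φ(t)) / Δ(t)`, so `F(t) + F(φ(t))` is constant, equal to `F(γ)` at `t = 0`. The
hypothesis says exactly that `φ(α) = β`.
-/

open Real Set

noncomputable def ellipticDelta (k φ : ℝ) : ℝ := √(1 - k ^ 2 * sin φ ^ 2)

noncomputable def ellipticF (k φ : ℝ) : ℝ := ∫ θ in (0:ℝ)..φ, 1 / ellipticDelta k θ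

section ellipticDelta

variable {k : ℝ}

lemma one_sub_sq_mul_sin_sq_pos (hk : k ^ 2 < 1) (φ : ℝ) : 0 < 1 - k ^ 2 * sin φ ^ 2 := by
  nlinarith [sin_sq_le_one φ, sq_nonneg k]

lemma ellipticDelta_pos (hk : k ^ 2 < 1) (φ : ℝ) : 0 < ellipticDelta k φ :=
  sqrt_pos.mpr (one_sub_sq_mul_sin_sq_pos hk φ)

lemma ellipticDelta_sq (hk : k ^ 2 < 1) (φ : ℝ) :
    ellipticDelta k φ ^ 2 = 1 - k ^ 2 * sin φ ^ 2 :=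
  sq_sqrt (one_sub_sq_mul_sin_sq_pos hk φ).le

@[simp]
lemma ellipticDelta_zero_right (k : ℝ) : ellipticDelta k 0 = 1 := by
  simp [ellipticDelta]

lemma continuous_ellipticDelta (k : ℝ) : Continuous (ellipticDelta k) := by
  unfold ellipticDelta
  fun_prop

lemma hasDerivAt_ellipticDelta (hk : k ^ 2 < 1) (φ : ℝ) :
    HasDerivAt (ellipticDelta k) (-(k ^ 2 * sin φ * cos φ) / ellipticDelta k φ) φ := by
  have hsin : HasDerivAt (fun θ => sin θ ^ 2) (2 * sin φ * cos φ) φ := by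
    simpa using (hasDerivAt_sin φ).fun_pow 2
  refine (((hsin.const_mul (k ^ 2)).const_sub 1).sqrt
    (one_sub_sq_mul_sin_sq_pos hk φ).ne').congr_deriv ?_
  rw [← ellipticDelta]
  field_simp

lemma hasDerivAt_ellipticF (hk : k ^ 2 < 1) (φ : ℝ) :
    HasDerivAt (ellipticF k) (1 / ellipticDelta k φ) φ :=
  ((continuous_const.div (continuous_ellipticDelta k) fun θ =>
    (ellipticDelta_pos hk θ).ne').integral_hasStrictDerivAt 0 φ).hasDerivAt

lemma sq_mul_sin_lt_one (hk : k ^ 2 < 1) (γ : ℝ) : (k * sin γ) ^ 2 < 1 := by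
  nlinarith [sin_sq_le_one γ, sq_nonneg k]

end ellipticDelta

section arctanMulTan

variable (e : ℝ) {t : ℝ}

lemma one_add_sq_mul_tan (ht : cos t ≠ 0) :
    1 + (e * tan t) ^ 2 = (cos t ^ 2 + (e * sin t) ^ 2) / cos t ^ 2 := by
  rw [tan_eq_sin_div_cos]
  field_simp

lemma cos_arctan_mul_tan (ht : 0 < cos t) :
    cos (arctan (e * tan t)) = cos t / √(cos t ^ 2 + (e * sin t) ^ 2) := by
  rw [cos_arctan, one_add_sq_mul_tan e ht.ne', sqrt_div' _ (sq_nonneg _), sqrt_sq ht.le,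
    one_div_div]

lemma sin_arctan_mul_tan (ht : 0 < cos t) :
    sin (arctan (e * tan t)) = e * sin t / √(cos t ^ 2 + (e * sin t) ^ 2) := by
  rw [sin_arctan, div_eq_mul_one_div, ← cos_arctan, cos_arctan_mul_tan e ht, tan_eq_sin_div_cos]
  field_simp

lemma hasDerivAt_arctan_mul_tan (ht : cos t ≠ 0) :
    HasDerivAt (fun s => arctan (e * tan s)) (e / (cos t ^ 2 + (e * sin t) ^ 2)) t := by
  convert ((hasDerivAt_tan ht).const_mul e).arctan using 1
  rw [one_add_sq_mul_tan e ht]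
  have : cos t ^ 2 + (e * sin t) ^ 2 ≠ 0 := by positivity
  field_simp

end arctanMulTan

section partner

variable {k γ : ℝ}

lemma cos_sq_add_sq_mul_sin_sq (hk : k ^ 2 < 1) (t : ℝ) :
    cos t ^ 2 + (ellipticDelta k γ * sin t) ^ 2 = ellipticDelta (k * sin γ) t ^ 2 := by
  rw [mul_pow, ellipticDelta_sq hk, ellipticDelta_sq (sq_mul_sin_lt_one hk γ)]
  linear_combination cos_sq_add_sin_sq t

lemma ellipticDelta_sq_sub_cos_sq (hk : k ^ 2 < 1) (t : ℝ) :
    ellipticDelta (k * sin γ) t ^ 2 - cos γ ^ 2 = (sin γ * ellipticDelta k t) ^ 2 := by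
  rw [mul_pow, ellipticDelta_sq hk, ellipticDelta_sq (sq_mul_sin_lt_one hk γ)]
  linear_combination -sin_sq_add_cos_sq γ

lemma abs_cos_div_ellipticDelta_le_one (hk : k ^ 2 < 1) (t : ℝ) :
    |cos γ / ellipticDelta (k * sin γ) t| ≤ 1 := by
  rw [← sq_le_one_iff_abs_le_one, div_pow,
    div_le_one (pow_pos (ellipticDelta_pos (sq_mul_sin_lt_one hk γ) t) 2)]
  nlinarith [ellipticDelta_sq_sub_cos_sq (γ := γ) hk t, sq_nonneg (sin γ * ellipticDelta k t)]

lemma sqrt_one_sub_cos_div_ellipticDelta_sq (hk : k ^ 2 < 1) (hsγ : 0 ≤ sin γ) (t : ℝ) :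
    √(1 - (cos γ / ellipticDelta (k * sin γ) t) ^ 2)
      = sin γ * ellipticDelta k t / ellipticDelta (k * sin γ) t := by
  have hA := ellipticDelta_pos (sq_mul_sin_lt_one hk γ) t
  have hΔ := ellipticDelta_pos hk t
  rw [← sqrt_sq (by positivity : 0 ≤ sin γ * ellipticDelta k t / ellipticDelta (k * sin γ) t),
    div_pow, div_pow, ← ellipticDelta_sq_sub_cos_sq hk]
  field_simp

/- Solves `cos t cos φ - Δ(γ) sin t sin φ = cos γ` for `φ`, the left side being
`Δ(k sin γ, t) cos (φ + arctan (Δ(γ) tan t))`. -/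
noncomputable def ellipticPartner (k γ t : ℝ) : ℝ :=
  arccos (cos γ / ellipticDelta (k * sin γ) t) - arctan (ellipticDelta k γ * tan t)

lemma ellipticPartner_zero (hγ : γ ∈ Icc 0 π) : ellipticPartner k γ 0 = γ := by
  simp [ellipticPartner, arccos_cos hγ.1 hγ.2]

lemma ellipticPartner_eq_of_cos_mul_cos_sub {α β : ℝ} (hk : k ^ 2 < 1)
    (hα : α ∈ Ico 0 (π / 2)) (hβ : β ∈ Icc 0 (π / 2))
    (h : cos α * cos β - ellipticDelta k γ * sin α * sin β = cos γ) :
    ellipticPartner k γ α = β := by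
  set ψ := arctan (ellipticDelta k γ * tan α)
  have hcos : 0 < cos α := cos_pos_of_mem_Ioo ⟨by linarith [pi_pos, hα.1], hα.2⟩
  have hψ : 0 ≤ ψ := arctan_nonneg.mpr
    (mul_nonneg (sqrt_nonneg _) (tan_nonneg_of_nonneg_of_le_pi_div_two hα.1 hα.2.le))
  have hA := (ellipticDelta_pos (sq_mul_sin_lt_one hk γ) α).ne'
  have key : arccos (cos γ / ellipticDelta (k * sin γ) α) = β + ψ := by
    refine injOn_cos ⟨arccos_nonneg _, arccos_le_pi _⟩
      ⟨by linarith [hβ.1], by linarith [hβ.2, arctan_lt_pi_div_two (ellipticDelta k γ * tan α)]⟩ ?_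
    rw [cos_arccos (abs_le.mp (abs_cos_div_ellipticDelta_le_one hk α)).1
      (abs_le.mp (abs_cos_div_ellipticDelta_le_one hk α)).2, cos_add,
      cos_arctan_mul_tan _ hcos, sin_arctan_mul_tan _ hcos, cos_sq_add_sq_mul_sin_sq hk,
      sqrt_sq (ellipticDelta_pos (sq_mul_sin_lt_one hk γ) α).le, ← h]
    field_simp
  rw [ellipticPartner, key]
  ring

lemma sin_ellipticPartner {t : ℝ} (hk : k ^ 2 < 1) (hsγ : 0 ≤ sin γ) (hct : 0 < cos t) :
    sin (ellipticPartner k γ t)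
      = (sin γ * ellipticDelta k t * cos t - cos γ * ellipticDelta k γ * sin t)
        / ellipticDelta (k * sin γ) t ^ 2 := by
  have hA := ellipticDelta_pos (sq_mul_sin_lt_one hk γ) t
  obtain ⟨hle, hge⟩ := abs_le.mp (abs_cos_div_ellipticDelta_le_one (γ := γ) hk t)
  rw [ellipticPartner, sin_sub, sin_arccos, cos_arccos hle hge,
    sqrt_one_sub_cos_div_ellipticDelta_sq hk hsγ, cos_arctan_mul_tan _ hct,
    sin_arctan_mul_tan _ hct, cos_sq_add_sq_mul_sin_sq hk, sqrt_sq hA.le]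
  field_simp

lemma ellipticDelta_ellipticPartner {t : ℝ} (hk : k ^ 2 < 1) (hγ : γ ∈ Icc 0 (π / 2))
    (ht : t ∈ Ico 0 (π / 2)) :
    ellipticDelta k (ellipticPartner k γ t)
      = (k ^ 2 * sin γ * cos γ * sin t * cos t + ellipticDelta k γ * ellipticDelta k t)
        / ellipticDelta (k * sin γ) t ^ 2 := by
  have hsγ : 0 ≤ sin γ := sin_nonneg_of_nonneg_of_le_pi hγ.1 (by linarith [hγ.2, pi_pos])
  have hcγ : 0 ≤ cos γ := cos_nonneg_of_mem_Icc ⟨by linarith [hγ.1, pi_pos], hγ.2⟩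
  have hst : 0 ≤ sin t := sin_nonneg_of_nonneg_of_le_pi ht.1 (by linarith [ht.2, pi_pos])
  have hct : 0 < cos t := cos_pos_of_mem_Ioo ⟨by linarith [ht.1, pi_pos], ht.2⟩
  have hA := ellipticDelta_pos (sq_mul_sin_lt_one hk γ) t
  have hΔγ := ellipticDelta_pos hk γ
  have hΔt := ellipticDelta_pos hk t
  rw [← sqrt_sq (by positivity : 0 ≤ (k ^ 2 * sin γ * cos γ * sin t * cos t
    + ellipticDelta k γ * ellipticDelta k t) / ellipticDelta (k * sin γ) t ^ 2),
    ellipticDelta, sin_ellipticPartner hk hsγ hct]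
  congr 1
  have hA2 := ellipticDelta_sq (sq_mul_sin_lt_one hk γ) t
  have hγ2 := ellipticDelta_sq hk γ
  have ht2 := ellipticDelta_sq hk t
  field_simp
  -- Jacobi's addition formula for `dn`, as a polynomial identity
  linear_combination (ellipticDelta (k * sin γ) t ^ 2 + 1 - (k * sin γ) ^ 2 * sin t ^ 2) * hA2
    + (-(k ^ 2 * sin γ ^ 2 * cos t ^ 2) - ellipticDelta k γ ^ 2) * ht2
    + (-(k ^ 2 * cos γ ^ 2 * sin t ^ 2) - (1 - k ^ 2 * sin t ^ 2)) * hγ2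
    + (-(k ^ 2 * sin t ^ 2 * (1 - k ^ 2 * sin γ ^ 2))
        - k ^ 4 * sin γ ^ 2 * sin t ^ 2 * cos t ^ 2) * cos_sq' γ
    + (-(k ^ 2 * sin γ ^ 2 * (1 - k ^ 2 * sin t ^ 2))
        - k ^ 4 * sin γ ^ 2 * sin t ^ 2 * (1 - sin γ ^ 2)) * cos_sq' t

lemma hasDerivAt_ellipticPartner {t : ℝ} (hk : k ^ 2 < 1) (hγ : γ ∈ Ioc 0 (π / 2))
    (ht : t ∈ Ico 0 (π / 2)) :
    HasDerivAt (ellipticPartner k γ)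
      (-(ellipticDelta k (ellipticPartner k γ t) / ellipticDelta k t)) t := by
  have hsγ : 0 < sin γ := sin_pos_of_pos_of_lt_pi hγ.1 (by linarith [hγ.2, pi_pos])
  have hct : 0 < cos t := cos_pos_of_mem_Ioo ⟨by linarith [ht.1, pi_pos], ht.2⟩
  have hA := ellipticDelta_pos (sq_mul_sin_lt_one hk γ) t
  have hΔt := ellipticDelta_pos hk t
  have hroot := sqrt_one_sub_cos_div_ellipticDelta_sq hk hsγ.le t
  have hz : |cos γ / ellipticDelta (k * sin γ) t| < 1 := by
    rw [← sq_lt_one_iff_abs_lt_one, ← sub_pos, ← sqrt_pos, hroot]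
    positivity
  have hθ := (hasDerivAt_arccos (abs_lt.mp hz).1.ne' (abs_lt.mp hz).2.ne).comp t
    ((hasDerivAt_const t (cos γ)).div (hasDerivAt_ellipticDelta (sq_mul_sin_lt_one hk γ) t) hA.ne')
  refine (hθ.sub (hasDerivAt_arctan_mul_tan (ellipticDelta k γ) hct.ne')).congr_deriv ?_
  rw [ellipticDelta_ellipticPartner hk (Ioc_subset_Icc_self hγ) ht, hroot,
    cos_sq_add_sq_mul_sin_sq hk]
  field_simp
  ring

end partner

theorem ellipticF_add_ellipticF_ellipticPartner {k γ t : ℝ} (hk : k ^ 2 < 1)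
    (hγ : γ ∈ Ioc 0 (π / 2)) (ht : t ∈ Ico 0 (π / 2)) :
    ellipticF k t + ellipticF k (ellipticPartner k γ t) = ellipticF k γ := by
  have hderiv : ∀ s ∈ Icc 0 t,
      HasDerivAt (fun s => ellipticF k s + ellipticF k (ellipticPartner k γ s)) 0 s := by
    intro s hs
    have hs' : s ∈ Ico 0 (π / 2) := ⟨hs.1, hs.2.trans_lt ht.2⟩
    refine ((hasDerivAt_ellipticF hk s).add ((hasDerivAt_ellipticF hk _).comp s
      (hasDerivAt_ellipticPartner hk hγ hs'))).congr_deriv ?_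
    have hΔs := (ellipticDelta_pos hk s).ne'
    have hΔpartner := (ellipticDelta_pos hk (ellipticPartner k γ s)).ne'
    field_simp
    ring
  have hconst := constant_of_has_deriv_right_zero
    (fun s hs => (hderiv s hs).continuousAt.continuousWithinAt)
    (fun s hs => (hderiv s (Ico_subset_Icc_self hs)).hasDerivWithinAt) t ⟨ht.1, le_rfl⟩
  rw [hconst, ellipticPartner_zero ⟨hγ.1.le, hγ.2.trans (by linarith [pi_pos])⟩, ellipticF,
    intervalIntegral.integral_same, zero_add]

theorem elliptic_addition_theorem (x α β γ : ℝ)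
    (hx : x ∈ Set.Ioo (0:ℝ) 1)
    (hα : α ∈ Set.Ioo 0 (π / 2)) (hβ : β ∈ Set.Ioo 0 (π / 2))
    (hγ : γ ∈ Set.Icc 0 (π / 2))
    (hcond : (Real.cos α / Real.sin α) * (Real.cos β / Real.sin β)
      = Real.cos γ / (Real.sin α * Real.sin β)
        + Real.sqrt (1 - x ^ 2 * Real.sin γ ^ 2)) :
    (∫ φ in (0:ℝ)..α, 1 / Real.sqrt (1 - x ^ 2 * Real.sin φ ^ 2))
      + (∫ φ in (0:ℝ)..β, 1 / Real.sqrt (1 - x ^ 2 * Real.sin φ ^ 2))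
      = ∫ φ in (0:ℝ)..γ, 1 / Real.sqrt (1 - x ^ 2 * Real.sin φ ^ 2) := by
  have hx2 : x ^ 2 < 1 := by nlinarith [hx.1, hx.2]
  have hsα : 0 < sin α := sin_pos_of_pos_of_lt_pi hα.1 (by linarith [hα.2, pi_pos])
  have hsβ : 0 < sin β := sin_pos_of_pos_of_lt_pi hβ.1 (by linarith [hβ.2, pi_pos])
  have hrel : cos α * cos β - ellipticDelta x γ * sin α * sin β = cos γ := by
    rw [ellipticDelta]
    field_simp at hcond
    linear_combination hcond
  have hγ0 : γ ≠ 0 := by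
    rintro rfl
    have : cos (α + β) = cos 0 := by simpa [cos_add] using hrel
    linarith [cos_lt_cos_of_nonneg_of_le_pi le_rfl (by linarith [hα.2, hβ.2])
      (by linarith [hα.1, hβ.1] : 0 < α + β)]
  have hpartner := ellipticPartner_eq_of_cos_mul_cos_sub hx2 (Ioo_subset_Ico_self hα)
    (Ioo_subset_Icc_self hβ) hrel
  have hsum := ellipticF_add_ellipticF_ellipticPartner hx2 ⟨hγ.1.lt_of_ne' hγ0, hγ.2⟩
    (Ioo_subset_Ico_self hα)
  rwa [hpartner] at hsum
end

section
/- For |x| < 1, (π/2) ∫₀^{π/2} dφ/√(1 + x sin φ) = ∫₀^{π/2} arccos(x sin²φ)/√(1 − x² sin⁴φ) dφ. -/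
/-!
For `a, b > 0` the polar angle of `(a cos θ, b sin θ)` is an antiderivative of
`a b / (a² cos² θ + b² sin² θ)`. Evaluated at `π/2` this gives
`1/√(1+c) = (2/π) ∫₀^{π/2} dθ/(1 + c sin² θ)`; evaluated at `π/4`, after the substitution
`θ = π/2 - 2u`, it gives `∫₀^{π/2} dθ/(1 + t sin θ) = arccos t / √(1 - t²)`. With `c = x sin φ`
and `t = x sin² φ` both sides of the identity become the integral of `1/(1 + x sin φ sin² θ)` over
the square `[0, π/2]²`, taken in the two orders of integration, so Fubini's theorem finishes the
proof.
-/

open Real MeasureTheory Set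
open scoped Interval

theorem intervalIntegral_integral_swap {E : Type*} [NormedAddCommGroup E] [NormedSpace ℝ E]
    [CompleteSpace E] {f : ℝ → ℝ → E} {a b c d : ℝ}
    (hf : ContinuousOn (Function.uncurry f) ([[a, b]] ×ˢ [[c, d]])) :
    ∫ x in a..b, ∫ y in c..d, f x y = ∫ y in c..d, ∫ x in a..b, f x y := by
  simp only [intervalIntegral.intervalIntegral_eq_integral_uIoc, integral_smul]
  have hint : Integrable (Function.uncurry f)
      ((volume.restrict (Ι a b)).prod (volume.restrict (Ι c d))) := by
    rw [Measure.prod_restrict, ← Measure.volume_eq_prod]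
    exact (hf.integrableOn_compact (isCompact_uIcc.prod isCompact_uIcc)).mono_set
      (prod_mono uIoc_subset_uIcc uIoc_subset_uIcc)
  rw [integral_integral_swap hint]
  exact smul_comm _ _ _

lemma mul_cos_sq_add_mul_sin_sq_pos {a b : ℝ} (ha : 0 < a) (hb : 0 < b) (θ : ℝ) :
    0 < a * cos θ ^ 2 + b * sin θ ^ 2 := by
  rcases le_total a b with h | h
  · nlinarith [mul_nonneg (sub_nonneg.2 h) (sq_nonneg (sin θ)), sin_sq_add_cos_sq θ]
  · nlinarith [mul_nonneg (sub_nonneg.2 h) (sq_nonneg (cos θ)), sin_sq_add_cos_sq θ]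

/-- The polar angle of the point `(a cos θ, b sin θ)`, made continuous in `θ`: on `(-π/2, π/2)` it
is `arctan (b tan θ / a)`, rewritten with the arctangent subtraction formula so that it has no
poles. -/
noncomputable def ellipsePolarAngle (a b θ : ℝ) : ℝ :=
  θ + arctan ((b - a) * sin θ * cos θ / (a * cos θ ^ 2 + b * sin θ ^ 2))

lemma hasDerivAt_ellipsePolarAngle {a b : ℝ} (ha : 0 < a) (hb : 0 < b) (θ : ℝ) :
    HasDerivAt (ellipsePolarAngle a b) (a * b / (a ^ 2 * cos θ ^ 2 + b ^ 2 * sin θ ^ 2)) θ := by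
  have hden_pos := mul_cos_sq_add_mul_sin_sq_pos ha hb θ
  have hsq_pos := mul_cos_sq_add_mul_sin_sq_pos (pow_pos ha 2) (pow_pos hb 2) θ
  have hnum : HasDerivAt (fun θ => (b - a) * sin θ * cos θ)
      ((b - a) * cos θ * cos θ + (b - a) * sin θ * -sin θ) θ :=
    ((hasDerivAt_sin θ).const_mul (b - a)).mul (hasDerivAt_cos θ)
  have hden : HasDerivAt (fun θ => a * cos θ ^ 2 + b * sin θ ^ 2)
      (a * (2 * cos θ * -sin θ) + b * (2 * sin θ * cos θ)) θ :=
    (((hasDerivAt_cos θ).pow 2).const_mul a).add (((hasDerivAt_sin θ).pow 2).const_mul b)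
      |>.congr_deriv (by ring)
  refine ((hasDerivAt_id θ).add (hnum.div hden hden_pos.ne').arctan).congr_deriv ?_
  simp only [Pi.div_apply]
  field_simp
  linear_combination
    a * b * (sin θ ^ 2 + cos θ ^ 2) * (a ^ 2 * cos θ ^ 2 + b ^ 2 * sin θ ^ 2) *
      sin_sq_add_cos_sq θ

lemma integral_one_div_sq_mul_cos_sq_add_sq_mul_sin_sq {a b : ℝ} (ha : 0 < a) (hb : 0 < b)
    (u : ℝ) :
    ∫ θ in 0..u, 1 / (a ^ 2 * cos θ ^ 2 + b ^ 2 * sin θ ^ 2)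
      = ellipsePolarAngle a b u / (a * b) := by
  have hF θ : HasDerivAt (fun θ => ellipsePolarAngle a b θ / (a * b))
      (1 / (a ^ 2 * cos θ ^ 2 + b ^ 2 * sin θ ^ 2)) θ :=
    (hasDerivAt_ellipsePolarAngle ha hb θ).div_const (a * b) |>.congr_deriv (by field_simp)
  have hint : Continuous fun θ => 1 / (a ^ 2 * cos θ ^ 2 + b ^ 2 * sin θ ^ 2) :=
    continuous_const.div (by fun_prop) fun θ =>
      (mul_cos_sq_add_mul_sin_sq_pos (pow_pos ha 2) (pow_pos hb 2) θ).ne'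
  rw [intervalIntegral.integral_eq_sub_of_hasDerivAt (fun θ _ => hF θ)
    (hint.intervalIntegrable _ _)]
  simp [ellipsePolarAngle]

lemma ellipsePolarAngle_pi_div_two (a b : ℝ) : ellipsePolarAngle a b (π / 2) = π / 2 := by
  simp [ellipsePolarAngle]

lemma ellipsePolarAngle_pi_div_four {a b : ℝ} (ha : 0 < a) (hb : 0 < b) :
    ellipsePolarAngle a b (π / 4) = arctan (b / a) := by
  have hcos : cos (π / 4) ^ 2 ≠ 0 := by rw [cos_pi_div_four]; positivity
  have hsub : (b / a + -1) / (1 - b / a * -1) = (b - a) / (a + b) := by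
    rw [mul_neg_one, sub_neg_eq_add, div_eq_div_iff (by positivity) (by positivity)]
    field_simp
    ring
  rw [ellipsePolarAngle, sin_pi_div_four, ← cos_pi_div_four, mul_assoc, ← sq, ← add_mul,
    mul_div_mul_right _ _ hcos, ← hsub, ← arctan_add (by nlinarith [div_pos hb ha]), arctan_neg,
    arctan_one]
  ring

lemma arccos_eq_two_mul_arctan {t : ℝ} (ht : |t| < 1) :
    arccos t = 2 * arctan (√(1 - t) / √(1 + t)) := by
  obtain ⟨ht₁, ht₂⟩ := abs_lt.mp ht
  refine arccos_eq_of_eq_cos (by positivity) ?_ ?_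
  · linarith [arctan_lt_pi_div_two (√(1 - t) / √(1 + t))]
  · rw [cos_two_mul, cos_sq_arctan, div_pow, sq_sqrt (by linarith), sq_sqrt (by linarith)]
    have : 1 + t ≠ 0 := by linarith
    field_simp
    ring

lemma integral_one_div_one_add_mul_sin_sq {c : ℝ} (hc : -1 < c) :
    ∫ θ in 0..π / 2, 1 / (1 + c * sin θ ^ 2) = π / (2 * √(1 + c)) := by
  have hb : 0 < √(1 + c) := sqrt_pos.mpr (by linarith)
  calc ∫ θ in 0..π / 2, 1 / (1 + c * sin θ ^ 2)
      = ∫ θ in 0..π / 2, 1 / (1 ^ 2 * cos θ ^ 2 + √(1 + c) ^ 2 * sin θ ^ 2) := by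
        congr 1 with θ
        rw [sq_sqrt (by linarith)]
        congr 1
        linear_combination -sin_sq_add_cos_sq θ
    _ = π / (2 * √(1 + c)) := by
        rw [integral_one_div_sq_mul_cos_sq_add_sq_mul_sin_sq one_pos hb,
          ellipsePolarAngle_pi_div_two]
        ring

lemma integral_one_div_one_add_mul_sin {t : ℝ} (ht : |t| < 1) :
    ∫ θ in 0..π / 2, 1 / (1 + t * sin θ) = arccos t / √(1 - t ^ 2) := by
  obtain ⟨ht₁, ht₂⟩ := abs_lt.mp ht
  have ha : 0 < √(1 + t) := sqrt_pos.mpr (by linarith)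
  have hb : 0 < √(1 - t) := sqrt_pos.mpr (by linarith)
  have hhalf : ∫ θ in 0..π / 2, 1 / (1 + t * sin θ)
      = 2 * ∫ u in 0..π / 4, 1 / (√(1 + t) ^ 2 * cos u ^ 2 + √(1 - t) ^ 2 * sin u ^ 2) := by
    have h := intervalIntegral.integral_comp_sub_mul (fun θ => 1 / (1 + t * sin θ))
      (a := 0) (b := π / 4) two_ne_zero (π / 2)
    rw [mul_zero, sub_zero, show π / 2 - 2 * (π / 4) = 0 by ring, smul_eq_mul,
      eq_inv_mul_iff_mul_eq₀ two_ne_zero] at h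
    rw [← h]
    congr 1
    refine intervalIntegral.integral_congr fun u _ => ?_
    rw [sin_pi_div_two_sub, cos_two_mul, sq_sqrt (by linarith), sq_sqrt (by linarith)]
    congr 1
    linear_combination (t - 1) * sin_sq_add_cos_sq u
  rw [hhalf, integral_one_div_sq_mul_cos_sq_add_sq_mul_sin_sq ha hb,
    ellipsePolarAngle_pi_div_four ha hb, arccos_eq_two_mul_arctan ht,
    show 1 - t ^ 2 = (1 + t) * (1 - t) by ring, sqrt_mul (by linarith)]
  ring

theorem ramanujan_arccos_integral (x : ℝ) (hx : |x| < 1) :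
    (π / 2) * ∫ φ in (0:ℝ)..(π / 2), 1 / Real.sqrt (1 + x * Real.sin φ)
      = ∫ φ in (0:ℝ)..(π / 2),
          Real.arccos (x * Real.sin φ ^ 2) / Real.sqrt (1 - x ^ 2 * Real.sin φ ^ 4) := by
  have hsmall {c : ℝ} (hc : |c| ≤ 1) : |x * c| < 1 := by
    rw [abs_mul]
    exact mul_lt_one_of_nonneg_of_lt_one_left (abs_nonneg x) hx hc
  have hsin_sq φ : |sin φ ^ 2| ≤ 1 := by
    rw [abs_pow]
    exact pow_le_one₀ (abs_nonneg _) (abs_sin_le_one φ)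
  have hL φ : 1 / √(1 + x * sin φ)
      = 2 / π * ∫ θ in 0..π / 2, 1 / (1 + x * sin φ * sin θ ^ 2) := by
    rw [integral_one_div_one_add_mul_sin_sq (abs_lt.mp (hsmall (abs_sin_le_one φ))).1]
    field_simp
  have hR φ : arccos (x * sin φ ^ 2) / √(1 - x ^ 2 * sin φ ^ 4)
      = ∫ θ in 0..π / 2, 1 / (1 + x * sin φ ^ 2 * sin θ) := by
    rw [integral_one_div_one_add_mul_sin (hsmall (hsin_sq φ))]
    ring_nf
  have hcont : Continuous (Function.uncurry fun φ θ => 1 / (1 + x * sin φ * sin θ ^ 2)) :=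
    continuous_const.div (by fun_prop) fun p => by
      have hc : |sin p.1 * sin p.2 ^ 2| ≤ 1 := by
        rw [abs_mul]
        exact mul_le_one₀ (abs_sin_le_one p.1) (abs_nonneg _) (hsin_sq p.2)
      have hlt := (abs_lt.mp (hsmall hc)).1
      exact ne_of_gt (by rw [mul_assoc]; linarith)
  simp_rw [hL, hR]
  rw [intervalIntegral.integral_const_mul, ← mul_assoc, show π / 2 * (2 / π) = 1 by field_simp,
    one_mul, intervalIntegral_integral_swap hcont.continuousOn]
  simp only [mul_right_comm]
end

section
/- Let 0 < x < 1 and let α, β ∈ [0, π/2] satisfy (1 + sin β)/(1 − sin β) = ((1 + sin α)/(1 − sin α)) · ((1 + x sin α)/(1 − x sin α))². Then (1 + 2x) ∫₀^α dθ/√(1 − x³((2+x)/(1+2x)) sin²θ) = ∫₀^β dθ/√(1 − x((2+x)/(1+2x))³ sin²θ). -/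
/-!
With `u = sin θ`, substitute `sin φ = S(u) = u (1 + 2x + x²u²) / D(u)`, `D(u) = 1 + (2x + x²) u²`.
This cubic rational map satisfies `1 ± S(u) = (1 ± u) (1 ± xu)² / D(u)`, which turns the hypothesis
on `α, β` into `sin β = S(sin α)`. It also gives `cos φ = cos θ (1 - x²u²) / D(u)`, hence
`dφ/dθ = K(u) / D(u)` with `K(u) = 1 + 2x - (2x + x²) u²`, and
`1 - q S(u)² = (1 - p u²) (K(u) / ((1 + 2x) D(u)))²` for the moduli squared
`p = x³ (2 + x) / (1 + 2x)` and `q = x ((2 + x) / (1 + 2x))³`. As `K > 0` on `[0, α]`, this says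
`dφ / √(1 - q sin² φ) = (1 + 2x) dθ / √(1 - p sin² θ)`.
-/

open Real

lemma transformed_modulus_sq_lt_one {x : ℝ} (hx0 : 0 ≤ x) (hx1 : x < 1) :
    x * ((2 + x) / (1 + 2 * x)) ^ 3 < 1 := by
  rw [div_pow, mul_div_assoc', div_lt_one (by positivity)]
  nlinarith [pow_pos (sub_pos.2 hx1) 3,
    show (1 + 2 * x) ^ 3 - x * (2 + x) ^ 3 = (1 - x) ^ 3 * (1 + x) by ring]

lemma continuous_one_div_sqrt_one_sub_mul_sin_sq {k : ℝ} (hk : k < 1) :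
    Continuous fun θ => 1 / √(1 - k * sin θ ^ 2) := by
  refine continuous_const.div (by fun_prop) fun θ => (sqrt_pos.2 ?_).ne'
  rcases le_or_gt k 0 with hk0 | hk0
  · nlinarith [sq_nonneg (sin θ)]
  · nlinarith [sin_sq_le_one θ]

noncomputable def ramanujanCubic (x u : ℝ) : ℝ :=
  u * (1 + 2 * x + x ^ 2 * u ^ 2) / (1 + (2 * x + x ^ 2) * u ^ 2)

section ramanujanCubic

variable {x : ℝ}

lemma one_add_ramanujanCubic (hx : 0 ≤ x) (u : ℝ) :
    1 + ramanujanCubic x u = (1 + u) * (1 + x * u) ^ 2 / (1 + (2 * x + x ^ 2) * u ^ 2) := by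
  have : 0 < 1 + (2 * x + x ^ 2) * u ^ 2 := by positivity
  unfold ramanujanCubic
  field_simp
  ring

lemma one_sub_ramanujanCubic (hx : 0 ≤ x) (u : ℝ) :
    1 - ramanujanCubic x u = (1 - u) * (1 - x * u) ^ 2 / (1 + (2 * x + x ^ 2) * u ^ 2) := by
  have : 0 < 1 + (2 * x + x ^ 2) * u ^ 2 := by positivity
  unfold ramanujanCubic
  field_simp
  ring

lemma one_add_div_one_sub_ramanujanCubic (hx : 0 ≤ x) (u : ℝ) :
    (1 + ramanujanCubic x u) / (1 - ramanujanCubic x u)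
      = (1 + u) / (1 - u) * ((1 + x * u) / (1 - x * u)) ^ 2 := by
  have : 0 < 1 + (2 * x + x ^ 2) * u ^ 2 := by positivity
  rw [one_add_ramanujanCubic hx, one_sub_ramanujanCubic hx, div_div_div_cancel_right₀ this.ne',
    div_pow, mul_div_mul_comm]

lemma eq_ramanujanCubic_of_one_add_div_one_sub (hx : 0 ≤ x) {a b : ℝ} (ha : a ≠ 1)
    (hxa : x * a ≠ 1) (hb : b ≠ 1)
    (h : (1 + b) / (1 - b) = (1 + a) / (1 - a) * ((1 + x * a) / (1 - x * a)) ^ 2) :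
    b = ramanujanCubic x a := by
  have hS : 1 - ramanujanCubic x a ≠ 0 := by
    rw [one_sub_ramanujanCubic hx]
    exact div_ne_zero
      (mul_ne_zero (sub_ne_zero.2 ha.symm) (pow_ne_zero _ (sub_ne_zero.2 hxa.symm))) (by positivity)
  rw [← one_add_div_one_sub_ramanujanCubic hx, div_eq_div_iff (sub_ne_zero.2 hb.symm) hS] at h
  linarith

lemma one_sub_sq_ramanujanCubic (hx : 0 ≤ x) (u : ℝ) :
    1 - ramanujanCubic x u ^ 2
      = (1 - u ^ 2) * ((1 - x ^ 2 * u ^ 2) / (1 + (2 * x + x ^ 2) * u ^ 2)) ^ 2 := by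
  have : 0 < 1 + (2 * x + x ^ 2) * u ^ 2 := by positivity
  unfold ramanujanCubic
  field_simp
  ring

lemma one_sub_mul_sq_ramanujanCubic (hx : 0 ≤ x) (u : ℝ) :
    1 - x * ((2 + x) / (1 + 2 * x)) ^ 3 * ramanujanCubic x u ^ 2
      = (1 - x ^ 3 * ((2 + x) / (1 + 2 * x)) * u ^ 2)
        * ((1 + 2 * x - (2 * x + x ^ 2) * u ^ 2)
          / ((1 + 2 * x) * (1 + (2 * x + x ^ 2) * u ^ 2))) ^ 2 := by
  have : 0 < 1 + (2 * x + x ^ 2) * u ^ 2 := by positivity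
  have : 0 < 1 + 2 * x := by positivity
  unfold ramanujanCubic
  field_simp
  ring

lemma hasDerivAt_ramanujanCubic (hx : 0 ≤ x) (u : ℝ) :
    HasDerivAt (ramanujanCubic x)
      ((1 - x ^ 2 * u ^ 2) * (1 + 2 * x - (2 * x + x ^ 2) * u ^ 2)
        / (1 + (2 * x + x ^ 2) * u ^ 2) ^ 2) u := by
  have hD : 0 < 1 + (2 * x + x ^ 2) * u ^ 2 := by positivity
  have := ((hasDerivAt_id' u).mul
    (((hasDerivAt_pow 2 u).const_mul (x ^ 2)).const_add (1 + 2 * x))).div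
    (((hasDerivAt_pow 2 u).const_mul (2 * x + x ^ 2)).const_add 1) hD.ne'
  refine this.congr_deriv ?_
  simp only [Pi.mul_apply]
  field_simp
  ring

lemma sq_ramanujanCubic_lt_one (hx0 : 0 ≤ x) (hx1 : x ≤ 1) {u : ℝ} (hu : u ^ 2 < 1) :
    ramanujanCubic x u ^ 2 < 1 := by
  have : 0 < 1 - x ^ 2 * u ^ 2 := by nlinarith [pow_le_one₀ (n := 2) hx0 hx1, sq_nonneg u]
  have : 0 < 1 - u ^ 2 := by linarith
  rw [← sub_pos, one_sub_sq_ramanujanCubic hx0]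
  positivity

lemma hasDerivAt_arcsin_ramanujanCubic_sin (hx0 : 0 ≤ x) (hx1 : x ≤ 1) {θ : ℝ}
    (hθ : 0 < cos θ) :
    HasDerivAt (fun t => arcsin (ramanujanCubic x (sin t)))
      ((1 + 2 * x - (2 * x + x ^ 2) * sin θ ^ 2) / (1 + (2 * x + x ^ 2) * sin θ ^ 2)) θ := by
  have hsin : sin θ ^ 2 < 1 := by nlinarith [sin_sq_add_cos_sq θ]
  have hxsin : 0 < 1 - x ^ 2 * sin θ ^ 2 := by
    nlinarith [pow_le_one₀ (n := 2) hx0 hx1, sq_nonneg (sin θ)]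
  have hsqrt : √(1 - ramanujanCubic x (sin θ) ^ 2)
      = cos θ * ((1 - x ^ 2 * sin θ ^ 2) / (1 + (2 * x + x ^ 2) * sin θ ^ 2)) := by
    rw [one_sub_sq_ramanujanCubic hx0, ← cos_sq', ← mul_pow, sqrt_sq (by positivity)]
  obtain ⟨hS₁, hS₂⟩ :=
    abs_lt.1 ((sq_lt_one_iff_abs_lt_one _).1 (sq_ramanujanCubic_lt_one hx0 hx1 hsin))
  refine ((hasDerivAt_arcsin hS₁.ne' hS₂.ne).comp θ
    ((hasDerivAt_ramanujanCubic hx0 _).comp θ (hasDerivAt_sin θ))).congr_deriv ?_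
  rw [hsqrt]
  field_simp

lemma ramanujanCubic_integrand_eq (hx : 0 ≤ x) {u : ℝ}
    (hK : 0 < 1 + 2 * x - (2 * x + x ^ 2) * u ^ 2) :
    1 / √(1 - x * ((2 + x) / (1 + 2 * x)) ^ 3 * ramanujanCubic x u ^ 2)
        * ((1 + 2 * x - (2 * x + x ^ 2) * u ^ 2) / (1 + (2 * x + x ^ 2) * u ^ 2))
      = (1 + 2 * x) * (1 / √(1 - x ^ 3 * ((2 + x) / (1 + 2 * x)) * u ^ 2)) := by
  have : 0 < 1 + (2 * x + x ^ 2) * u ^ 2 := by positivity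
  have : 0 < 1 + 2 * x := by positivity
  rw [one_sub_mul_sq_ramanujanCubic hx, sqrt_mul' _ (sq_nonneg _), sqrt_sq (by positivity)]
  field_simp
  rw [div_mul_cancel_right₀ (by linarith), one_div]

end ramanujanCubic

theorem integral_one_div_sqrt_eq_arcsin_ramanujanCubic {x α : ℝ} (hx0 : 0 ≤ x) (hx1 : x < 1)
    (hα0 : 0 ≤ α) (hα : α < π / 2) :
    (1 + 2 * x) * ∫ θ in (0:ℝ)..α, 1 / √(1 - x ^ 3 * ((2 + x) / (1 + 2 * x)) * sin θ ^ 2)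
      = ∫ θ in (0:ℝ)..arcsin (ramanujanCubic x (sin α)),
          1 / √(1 - x * ((2 + x) / (1 + 2 * x)) ^ 3 * sin θ ^ 2) := by
  have hcos : ∀ θ ∈ Set.uIcc 0 α, 0 < cos θ := fun θ hθ => by
    rw [Set.uIcc_of_le hα0] at hθ
    exact cos_pos_of_mem_Ioo ⟨by linarith [pi_pos, hθ.1], by linarith [hθ.2]⟩
  have hsubst := intervalIntegral.integral_comp_mul_deriv
    (fun θ hθ => hasDerivAt_arcsin_ramanujanCubic_sin hx0 hx1.le (hcos θ hθ))
    (Continuous.div (by fun_prop) (by fun_prop) fun θ =>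
      (by positivity : (0:ℝ) < _).ne').continuousOn
    (continuous_one_div_sqrt_one_sub_mul_sin_sq (transformed_modulus_sq_lt_one hx0 hx1))
  rw [sin_zero, show ramanujanCubic x 0 = 0 by simp [ramanujanCubic], arcsin_zero] at hsubst
  rw [← hsubst, ← intervalIntegral.integral_const_mul]
  refine intervalIntegral.integral_congr fun θ hθ => ?_
  have hsin : sin θ ^ 2 < 1 := by nlinarith [sin_sq_add_cos_sq θ, hcos θ hθ]
  obtain ⟨hS₁, hS₂⟩ :=
    abs_lt.1 ((sq_lt_one_iff_abs_lt_one _).1 (sq_ramanujanCubic_lt_one hx0 hx1.le hsin))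
  have hK : 0 < 1 + 2 * x - (2 * x + x ^ 2) * sin θ ^ 2 := by nlinarith
  simp only [Function.comp_apply, sin_arcsin hS₁.le hS₂.le]
  exact (ramanujanCubic_integrand_eq hx0 hK).symm

theorem ramanujan_elliptic_transformation (x α β : ℝ)
    (hx : x ∈ Set.Ioo (0:ℝ) 1)
    (hα : α ∈ Set.Icc 0 (π / 2)) (hβ : β ∈ Set.Ico 0 (π / 2))
    (hcond : (1 + Real.sin β) / (1 - Real.sin β)
      = (1 + Real.sin α) / (1 - Real.sin α)
        * ((1 + x * Real.sin α) / (1 - x * Real.sin α)) ^ 2) :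
    (1 + 2 * x) * ∫ θ in (0:ℝ)..α,
        1 / Real.sqrt (1 - x ^ 3 * ((2 + x) / (1 + 2 * x)) * Real.sin θ ^ 2)
      = ∫ θ in (0:ℝ)..β,
          1 / Real.sqrt (1 - x * ((2 + x) / (1 + 2 * x)) ^ 3 * Real.sin θ ^ 2) := by
  obtain ⟨hx0, hx1⟩ := hx
  have hsinβ : sin β < 1 := by
    simpa using sin_lt_sin_of_lt_of_le_pi_div_two (by linarith [pi_pos, hβ.1]) le_rfl hβ.2
  -- at `α = π / 2` the right-hand side of `hcond` is the junk value `2 / 0 * _ = 0`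
  have hα' : α < π / 2 := by
    refine hα.2.lt_of_ne fun h => ?_
    rw [h, sin_pi_div_two, sub_self, div_zero, zero_mul] at hcond
    have : 0 ≤ sin β := sin_nonneg_of_nonneg_of_le_pi hβ.1 (by linarith [pi_pos, hβ.2])
    exact (div_pos (by linarith) (sub_pos.2 hsinβ)).ne' hcond
  have hsinα : sin α < 1 := by
    simpa using sin_lt_sin_of_lt_of_le_pi_div_two (by linarith [pi_pos, hα.1]) le_rfl hα'
  have hS := eq_ramanujanCubic_of_one_add_div_one_sub hx0.le hsinα.ne
    ((mul_le_of_le_one_right hx0.le (sin_le_one α)).trans_lt hx1).ne hsinβ.ne hcond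
  rw [integral_one_div_sqrt_eq_arcsin_ramanujanCubic hx0.le hx1 hα.1 hα', ← hS,
    arcsin_sin (by linarith [pi_pos, hβ.1]) hβ.2.le]
end

section
/- If v = √2·x/√(1 + x⁴) with x ∈ [0, 1], then ∫₀^v dt/√(1 − t⁴) = √2 · ∫₀^x dt/√(1 + t⁴). -/
/-!
Substitute `t = fagnano u = √2 u / √(1 + u⁴)`. Then
`fagnano' u = √2 (1 - u⁴) / (1 + u⁴)^{3/2}` and `1 - t⁴ = ((1 - u⁴) / (1 + u⁴))²`,
so `dt / √(1 - t⁴) = √2 du / √(1 + u⁴)` for `0 ≤ u < 1`. The substitution is monotone on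
`[0, 1]`, and for monotone substitutions the change of variables formula holds for Lebesgue
integrals with no hypothesis on the integrand; hence the endpoint `x = 1`, where the left-hand
integral is improper, needs no separate limit argument.
-/

open Real

noncomputable def fagnano (u : ℝ) : ℝ := √2 * u / √(1 + u ^ 4)

lemma hasDerivAt_fagnano (u : ℝ) :
    HasDerivAt fagnano (√2 * (1 - u ^ 4) / √(1 + u ^ 4) ^ 3) u := by
  have hpos : 0 < 1 + u ^ 4 := by positivity
  have hsq : √(1 + u ^ 4) ^ 2 = 1 + u ^ 4 := sq_sqrt hpos.le
  have hden : HasDerivAt (fun y ↦ √(1 + y ^ 4)) (4 * u ^ 3 / (2 * √(1 + u ^ 4))) u := by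
    simpa using ((hasDerivAt_pow 4 u).const_add 1).sqrt hpos.ne'
  refine (((hasDerivAt_id' u).const_mul √2).div hden (sqrt_pos.2 hpos).ne').congr_deriv ?_
  field_simp
  linear_combination 2 * hsq

lemma one_sub_fagnano_pow_four (u : ℝ) :
    1 - fagnano u ^ 4 = ((1 - u ^ 4) / (1 + u ^ 4)) ^ 2 := by
  have hpos : 0 < 1 + u ^ 4 := by positivity
  have hsq : √(1 + u ^ 4) ^ 2 = 1 + u ^ 4 := sq_sqrt hpos.le
  have hs4 : √(1 + u ^ 4) ^ 4 = (1 + u ^ 4) ^ 2 := by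
    rw [show (4 : ℕ) = 2 * 2 from rfl, pow_mul, hsq]
  have h24 : √2 ^ 4 = 4 := by
    rw [show (4 : ℕ) = 2 * 2 from rfl, pow_mul, sq_sqrt zero_le_two]
    norm_num
  rw [fagnano, div_pow, mul_pow, hs4, h24]
  field_simp
  ring

lemma one_div_sqrt_one_sub_fagnano_pow_four_mul_deriv {u : ℝ} (hu : u ^ 4 < 1) :
    1 / √(1 - fagnano u ^ 4) * (√2 * (1 - u ^ 4) / √(1 + u ^ 4) ^ 3)
      = √2 * (1 / √(1 + u ^ 4)) := by
  have hpos : 0 < 1 + u ^ 4 := by positivity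
  have hsq : √(1 + u ^ 4) ^ 2 = 1 + u ^ 4 := sq_sqrt hpos.le
  have hne : 1 - u ^ 4 ≠ 0 := by linarith
  rw [one_sub_fagnano_pow_four, sqrt_sq (div_nonneg (by linarith) hpos.le)]
  field_simp
  linear_combination -hsq

theorem lemniscate_fagnano (x : ℝ) (hx : x ∈ Set.Icc (0:ℝ) 1) :
    ∫ t in (0:ℝ)..(Real.sqrt 2 * x / Real.sqrt (1 + x ^ 4)),
        1 / Real.sqrt (1 - t ^ 4)
      = Real.sqrt 2 * ∫ t in (0:ℝ)..x, 1 / Real.sqrt (1 + t ^ 4) := by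
  obtain ⟨hx0, hx1⟩ := hx
  have hpow_lt {u : ℝ} (hu : u ∈ Set.Ioo 0 x) : u ^ 4 < 1 :=
    pow_lt_one₀ hu.1.le (hu.2.trans_le hx1) four_ne_zero
  have hderiv_nonneg (u : ℝ) (hu : u ∈ Set.Ioo (min 0 x) (max 0 x)) :
      0 ≤ √2 * (1 - u ^ 4) / √(1 + u ^ 4) ^ 3 := by
    rw [min_eq_left hx0, max_eq_right hx0] at hu
    have : 0 ≤ 1 - u ^ 4 := by linarith [hpow_lt hu]
    positivity
  have hsubst := intervalIntegral.integral_comp_mul_deriv_of_deriv_nonneg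
    (g := fun t ↦ 1 / √(1 - t ^ 4))
    (fun u _ ↦ (hasDerivAt_fagnano u).continuousAt.continuousWithinAt)
    (fun u _ ↦ hasDerivAt_fagnano u) hderiv_nonneg
  rw [show fagnano 0 = 0 by simp [fagnano]] at hsubst
  change ∫ t in (0:ℝ)..fagnano x, 1 / √(1 - t ^ 4) = _
  rw [← hsubst, ← intervalIntegral.integral_const_mul]
  exact intervalIntegral.integral_congr_Ioo_of_le hx0 fun u hu ↦
    one_div_sqrt_one_sub_fagnano_pow_four_mul_deriv (hpow_lt hu)
end
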